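/- Let H be a group, G̃ = ℤ(H) ⋊ H the semidirect product of the additive group of the integral group ring ℤ(H) by H acting by right multiplication, G the subgroup of G̃ generated by A_ℤ(H) × {1} and {0} × H, and N = I₂(H) × {1}, which is normal in G. Then the assignment h ↦ N(0,h), h^ψ ↦ N(0,h)^{(1,1)} extends to a group epimorphism ε : χ(H) → G/N whose kernel equals the derived subgroup L(H)′ of L(H). -/

import Mathlib

open Subgroup
open scoped commutatorElement

/-- Relators of the weak commutativity group. -/
def chiRel (H : Type*) [Group H] : Set (Monoid.Coprod H H) :=
  {x | ∃ h : H, x = ⁅(Monoid.Coprod.inl h : Monoid.Coprod H H), Monoid.Coprod.inr h⁆}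

/-- The weak commutativity group χ(H). -/
def chi (H : Type*) [Group H] : Type _ :=
  Monoid.Coprod H H ⧸ Subgroup.normalClosure (chiRel H)

noncomputable instance (H : Type*) [Group H] : Group (chi H) :=
  QuotientGroup.Quotient.group _

/-- Canonical map H → χ(H). -/
noncomputable def chiIota (H : Type*) [Group H] : H →* chi H :=
  (QuotientGroup.mk' _).comp Monoid.Coprod.inl

/-- Canonical map H → χ(H), h ↦ h^ψ. -/
noncomputable def chiPsi (H : Type*) [Group H] : H →* chi H :=
  (QuotientGroup.mk' _).comp Monoid.Coprod.inr

noncomputable def chiH (H : Type*) [Group H] : Subgroup (chi H) := (chiIota H).range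
noncomputable def chiHpsi (H : Type*) [Group H] : Subgroup (chi H) := (chiPsi H).range

/-- L(H) = ⟨h⁻¹ h^ψ⟩. -/
noncomputable def Lsub (H : Type*) [Group H] : Subgroup (chi H) :=
  Subgroup.closure {x | ∃ h : H, x = (chiIota H h)⁻¹ * chiPsi H h}

/-- D(H) = [H, H^ψ]. -/
noncomputable def Dsub (H : Type*) [Group H] : Subgroup (chi H) := ⁅chiH H, chiHpsi H⁆

/-- W(H) = L(H) ∩ D(H). -/
noncomputable def Wsub (H : Type*) [Group H] : Subgroup (chi H) := Lsub H ⊓ Dsub H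

/-- R(H) = [H, L(H), H^ψ]. -/
noncomputable def Rsub (H : Type*) [Group H] : Subgroup (chi H) := ⁅⁅chiH H, Lsub H⁆, chiHpsi H⁆

open MonoidAlgebra

/-- The augmentation ideal A_ℤ(H) of the integral group ring ℤ(H),
generated by {h - 1 : h ∈ H}. -/
noncomputable def augIdeal (H : Type*) [Group H] : Ideal (MonoidAlgebra ℤ H) :=
  Ideal.span {x | ∃ h : H, x = MonoidAlgebra.of ℤ H h - 1}

/-- The two-sided ideal I₂(H) of ℤ(H) generated by {(h - 1)² : h ∈ H}
(as a left ideal span of all right multiples of the generators). -/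
noncomputable def ideal2 (H : Type*) [Group H] : Ideal (MonoidAlgebra ℤ H) :=
  Ideal.span {x | ∃ (h : H) (b : MonoidAlgebra ℤ H),
    x = (MonoidAlgebra.of ℤ H h - 1) ^ 2 * b}

/-- Right multiplication by h as an automorphism of the additive group ℤ(H). -/
noncomputable def rmul (H : Type*) [Group H] (h : H) :
    MonoidAlgebra ℤ H ≃+ MonoidAlgebra ℤ H where
  toFun x := x * MonoidAlgebra.of ℤ H h
  invFun x := x * MonoidAlgebra.of ℤ H h⁻¹
  left_inv x := by
    simp [mul_assoc, ← map_mul, ← MonoidAlgebra.one_def]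
  right_inv x := by
    simp [mul_assoc, ← map_mul, ← MonoidAlgebra.one_def]
  map_add' x y := add_mul x y _

/-- The action of H on the (multiplicatively written) additive group of ℤ(H)
for which conjugation in ℤ(H) ⋊ H by h ∈ H is right multiplication by h. -/
noncomputable def phiAct (H : Type*) [Group H] :
    H →* MulAut (Multiplicative (MonoidAlgebra ℤ H)) where
  toFun h := AddEquiv.toMultiplicative (rmul H h⁻¹)
  map_one' := by
    ext x
    simp [rmul, ← MonoidAlgebra.one_def]
  map_mul' h₁ h₂ := by
    ext x
    simp [rmul, mul_assoc, ← map_mul]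

/-- G̃ = ℤ(H) ⋊ H. -/
abbrev Gtilde (H : Type*) [Group H] : Type _ :=
  SemidirectProduct (Multiplicative (MonoidAlgebra ℤ H)) H (phiAct H)
/-- The subgroup G of G̃ generated by A_ℤ(H) × {1} and {0} × H. -/
noncomputable def Gsub (H : Type*) [Group H] : Subgroup (Gtilde H) :=
  Subgroup.closure
    ({x | ∃ a ∈ augIdeal H, x = SemidirectProduct.inl (Multiplicative.ofAdd a)} ∪
     {x | ∃ h : H, x = SemidirectProduct.inr h})

/-- The subgroup N = I₂(H) × {1} of G̃. -/
noncomputable def Nsub (H : Type*) [Group H] : Subgroup (Gtilde H) :=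
  Subgroup.map (SemidirectProduct.inl :
      Multiplicative (MonoidAlgebra ℤ H) →* Gtilde H)
    (AddSubgroup.toSubgroup (ideal2 H).toAddSubgroup)

lemma ideal2_mul_right {H : Type*} [Group H] {x : MonoidAlgebra ℤ H}
    (hx : x ∈ ideal2 H) (c : MonoidAlgebra ℤ H) : x * c ∈ ideal2 H := by
  induction hx using Submodule.span_induction with
  | mem y hy =>
      obtain ⟨h, b, rfl⟩ := hy
      exact Ideal.subset_span ⟨h, b * c, by rw [mul_assoc]⟩
  | zero => simpa using (ideal2 H).zero_mem
  | add y z _ _ hy hz => simpa [add_mul] using (ideal2 H).add_mem hy hz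
  | smul r y _ hy => simpa [smul_mul_assoc, mul_assoc] using (ideal2 H).smul_mem r hy

instance Nsub_normal (H : Type*) [Group H] : (Nsub H).Normal := by
  constructor
  intro x hx g
  obtain ⟨a, ha, rfl⟩ := hx
  have key : g * SemidirectProduct.inl a * g⁻¹ =
      SemidirectProduct.inl (phiAct H g.right a) := by
    ext
    · simp [SemidirectProduct.mul_left, SemidirectProduct.inv_left, mul_comm]
    · simp
  rw [key]
  refine ⟨phiAct H g.right a, ?_, rfl⟩
  show Multiplicative.toAdd (phiAct H g.right a) ∈ ideal2 H
  exact ideal2_mul_right ha (MonoidAlgebra.of ℤ H g.right⁻¹)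
/-- N viewed as a subgroup of G. -/
noncomputable def NsubG (H : Type*) [Group H] : Subgroup ↥(Gsub H) :=
  (Nsub H).subgroupOf (Gsub H)

instance NsubG_normal (H : Type*) [Group H] : (NsubG H).Normal :=
  (Nsub_normal H).subgroupOf (Gsub H)

lemma inr_mem_Gsub (H : Type*) [Group H] (h : H) :
    (SemidirectProduct.inr h : Gtilde H) ∈ Gsub H :=
  Subgroup.subset_closure (Or.inr ⟨h, rfl⟩)

lemma conj_mem_Gsub (H : Type*) [Group H] (h : H) :
    (SemidirectProduct.inl (Multiplicative.ofAdd (1 : MonoidAlgebra ℤ H)))⁻¹ *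
        SemidirectProduct.inr h *
        SemidirectProduct.inl (Multiplicative.ofAdd (1 : MonoidAlgebra ℤ H)) ∈
      Gsub H := by
  have key : (SemidirectProduct.inl (Multiplicative.ofAdd (1 : MonoidAlgebra ℤ H)))⁻¹ *
      SemidirectProduct.inr h *
      SemidirectProduct.inl (Multiplicative.ofAdd (1 : MonoidAlgebra ℤ H)) =
      (SemidirectProduct.inr h : Gtilde H) *
        SemidirectProduct.inl (Multiplicative.ofAdd
          ((1 : MonoidAlgebra ℤ H) - MonoidAlgebra.of ℤ H h)) := by
    apply SemidirectProduct.ext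
    · simp only [SemidirectProduct.mul_left, SemidirectProduct.inv_left,
        SemidirectProduct.left_inl, SemidirectProduct.left_inr, SemidirectProduct.right_inl,
        SemidirectProduct.right_inr, SemidirectProduct.mul_right, SemidirectProduct.inv_right,
        map_one, inv_one, mul_one, one_mul, MulAut.one_apply]
      apply Multiplicative.toAdd.injective
      change -1 + (1 : MonoidAlgebra ℤ H) * MonoidAlgebra.of ℤ H h⁻¹ =
        ((1 : MonoidAlgebra ℤ H) - MonoidAlgebra.of ℤ H h) * MonoidAlgebra.of ℤ H h⁻¹
      rw [sub_mul, ← map_mul, mul_inv_cancel, map_one, one_mul]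
      abel
    · simp [div_eq_mul_inv, SemidirectProduct.mul_right, SemidirectProduct.inv_right]
  rw [key]
  exact mul_mem (inr_mem_Gsub H h)
    (Subgroup.subset_closure (Or.inl
      ⟨1 - MonoidAlgebra.of ℤ H h,
        by simpa using (augIdeal H).neg_mem (Ideal.subset_span ⟨h, rfl⟩), rfl⟩))

/-!
`ε` is well defined because `[h, h^ψ]` goes to the class of `(h⁻¹(h - 1)²h⁻¹, 1) ∈ N`, and it is
onto because `ℓ(g) = g⁻¹g^ψ` goes to `N(1 - g, 1)` and the elements `g - 1` generate `A_ℤ(H)`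
additively. So `ε` maps `L(H)` into the abelian image of `A_ℤ(H) × {1}`, whence `L(H)' ≤ ker ε`.

Conversely, `ker ε` lies in the kernel of the fold map `χ(H) → H`, which is `L(H)`. In
`L(H)/L(H)'`, with `H` acting by conjugation, the classes `λ(g)` of `ℓ(g)` form a 1-cocycle with
`g • λ(g) = λ(g)`, and every such cocycle satisfies `(h - 1)² • λ(g) = 0`. Hence the linear map
`Φ : ℤ(H) → L(H)/L(H)'` with `Φ(1 - g) = λ(g)` kills `I₂(H)`. An `x ∈ L(H)` with
`ε(x) = N(a, 1)` has class `Φ(a)`, so `x ∈ ker ε` forces `a ∈ I₂(H)` and `x ∈ L(H)'`.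
-/

open groupCohomology

section Cocycle

variable {G M : Type*} [Group G] [CommGroup M] [MulDistribMulAction G M] {f : G → M}

theorem map_inv_of_isMulCocycle₁_of_smul_self (hf : IsMulCocycle₁ f)
    (hfix : ∀ g, g • f g = f g) (g : G) : f g⁻¹ = (f g)⁻¹ := by
  calc f g⁻¹ = g • g⁻¹ • f g⁻¹ := (smul_inv_smul g _).symm
    _ = (f g)⁻¹ := by rw [hfix, map_inv_of_isMulCocycle₁ hf]

theorem smul_mul_inv_smul_of_isMulCocycle₁ (hf : IsMulCocycle₁ f)
    (hfix : ∀ g, g • f g = f g) (g h : G) : h • f g * h⁻¹ • f g = f g ^ 2 := by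
  have hinv := map_inv_of_isMulCocycle₁_of_smul_self hf hfix
  -- evaluate `f (h * g)` directly and through `(h * g)⁻¹ = g⁻¹ * h⁻¹`
  have swap (h : G) : h • f g * f h = g⁻¹ • f h * f g := by
    rw [← hf, ← inv_inv (h * g), hinv, mul_inv_rev, hf, hinv, hinv, smul_inv', ← mul_inv,
      inv_inv]
  have h₁ := swap h
  have h₂ := swap h⁻¹
  rw [hinv, smul_inv'] at h₂
  calc h • f g * h⁻¹ • f g = (h • f g * f h) * (h⁻¹ • f g * (f h)⁻¹) := by
        rw [mul_mul_mul_comm, mul_inv_cancel, mul_one]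
    _ = (g⁻¹ • f h * f g) * ((g⁻¹ • f h)⁻¹ * f g) := by rw [h₁, h₂]
    _ = f g ^ 2 := by rw [mul_mul_mul_comm, mul_inv_cancel, one_mul, sq]

theorem smul_smul_mul_eq_sq_of_isMulCocycle₁ (hf : IsMulCocycle₁ f)
    (hfix : ∀ g, g • f g = f g) (g h : G) : h • h • f g * f g = (h • f g) ^ 2 := by
  rw [← smul_pow', ← smul_mul_inv_smul_of_isMulCocycle₁ hf hfix g h, smul_mul', smul_inv_smul]

/-- The linear extension of `f` kills `g (h - 1)² k` in the group ring. -/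
theorem map_mul_mul_mul_map_mul_eq_sq_of_isMulCocycle₁ (hf : IsMulCocycle₁ f)
    (hfix : ∀ g, g • f g = f g) (g h k : G) :
    f (g * h * h * k) * f (g * k) = f (g * h * k) ^ 2 := by
  have hk : f (h * h * k) * f k = f (h * k) ^ 2 := by
    rw [mul_assoc, hf h (h * k), hf h k, smul_mul', hfix, mul_pow,
      ← smul_smul_mul_eq_sq_of_isMulCocycle₁ hf hfix k h, sq (f h)]
    ac_rfl
  calc f (g * h * h * k) * f (g * k) = g • (f (h * h * k) * f k) * f g ^ 2 := by
        rw [mul_assoc (g * h), mul_assoc g, hf g, hf g, smul_mul', sq]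
        ac_rfl
    _ = f (g * h * k) ^ 2 := by rw [hk, smul_pow', ← mul_pow, mul_assoc g, hf g]

end Cocycle

section GroupRing

variable {H : Type*} [Group H]

theorem mul_mem_closure_of_sub_one (c : MonoidAlgebra ℤ H) {x : MonoidAlgebra ℤ H}
    (hx : x ∈ AddSubgroup.closure {y | ∃ h : H, y = of ℤ H h - 1}) :
    c * x ∈ AddSubgroup.closure {y | ∃ h : H, y = of ℤ H h - 1} := by
  induction c using MonoidAlgebra.induction_on with
  | of g =>
    induction hx using AddSubgroup.closure_induction with
    | mem y hy =>
      obtain ⟨h, rfl⟩ := hy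
      have : of ℤ H g * (of ℤ H h - 1) = (of ℤ H (g * h) - 1) - (of ℤ H g - 1) := by
        rw [map_mul]; noncomm_ring
      rw [this]
      exact sub_mem (AddSubgroup.subset_closure ⟨_, rfl⟩) (AddSubgroup.subset_closure ⟨_, rfl⟩)
    | zero => simp
    | add y z _ _ hy hz => rw [mul_add]; exact add_mem hy hz
    | neg y _ hy => rw [mul_neg]; exact neg_mem hy
  | add c d hc hd => rw [add_mul]; exact add_mem hc hd
  | smul n c hc => rw [smul_mul_assoc]; exact zsmul_mem hc n

theorem mem_closure_of_mem_augIdeal {a : MonoidAlgebra ℤ H} (ha : a ∈ augIdeal H) :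
    a ∈ AddSubgroup.closure {y | ∃ h : H, y = of ℤ H h - 1} := by
  induction ha using Submodule.span_induction with
  | mem y hy => exact AddSubgroup.subset_closure hy
  | zero => exact zero_mem _
  | add y z _ _ hy hz => exact add_mem hy hz
  | smul c y _ hy => exact mul_mem_closure_of_sub_one c hy

theorem map_eq_zero_of_mem_ideal2 {A : Type*} [AddCommGroup A] (Φ : MonoidAlgebra ℤ H →+ A)
    (hΦ : ∀ g h k : H, Φ (of ℤ H g * (of ℤ H h - 1) ^ 2 * of ℤ H k) = 0)
    {a : MonoidAlgebra ℤ H} (ha : a ∈ ideal2 H) : Φ a = 0 := by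
  suffices ∀ c, Φ (c * a) = 0 by simpa using this 1
  induction ha using Submodule.span_induction with
  | mem y hy =>
    obtain ⟨h, b, rfl⟩ := hy
    intro c
    induction c using MonoidAlgebra.induction_on with
    | of g =>
      induction b using MonoidAlgebra.induction_on with
      | of k => rw [← mul_assoc]; exact hΦ g h k
      | add b b' hb hb' => rw [mul_add, mul_add, map_add, hb, hb', add_zero]
      | smul n b hb => rw [mul_smul_comm, mul_smul_comm, map_zsmul, hb, smul_zero]
    | add c d hc hd => rw [add_mul, map_add, hc, hd, add_zero]
    | smul n c hc => rw [smul_mul_assoc, map_zsmul, hc, smul_zero]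
  | zero => simp
  | add y z _ _ hy hz => intro c; rw [mul_add, map_add, hy, hz, add_zero]
  | smul d y _ hy => intro c; rw [smul_eq_mul, ← mul_assoc]; exact hy (c * d)

noncomputable def groupRingLift {A : Type*} [AddCommGroup A] (v : H → A) :
    MonoidAlgebra ℤ H →+ A :=
  (Finsupp.liftAddHom fun g => zmultiplesHom A (v g)).comp
    MonoidAlgebra.coeffAddEquiv.toAddMonoidHom

@[simp]
theorem groupRingLift_of {A : Type*} [AddCommGroup A] (v : H → A) (g : H) :
    groupRingLift v (of ℤ H g) = v g := by
  simp [groupRingLift]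

theorem groupRingLift_eq_zero_of_mem_ideal2 {M : Type*} [CommGroup M] [MulDistribMulAction H M]
    {f : H → M} (hf : IsMulCocycle₁ f) (hfix : ∀ g, g • f g = f g) {a : MonoidAlgebra ℤ H}
    (ha : a ∈ ideal2 H) : groupRingLift (fun g => -Additive.ofMul (f g)) a = 0 := by
  refine map_eq_zero_of_mem_ideal2 _ (fun g h k => ?_) ha
  have expand : of ℤ H g * (of ℤ H h - 1) ^ 2 * of ℤ H k =
      of ℤ H (g * h * h * k) - 2 • of ℤ H (g * h * k) + of ℤ H (g * k) := by
    simp only [map_mul]; noncomm_ring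
  have key :=
    congrArg Additive.ofMul (map_mul_mul_mul_map_mul_eq_sq_of_isMulCocycle₁ hf hfix g h k)
  rw [ofMul_mul, ofMul_pow] at key
  rw [expand, map_add, map_sub, map_nsmul]
  simp only [groupRingLift_of]
  rw [← sub_eq_zero] at key
  rw [← neg_eq_zero, ← key]
  abel

end GroupRing

section WeakCommutativity

variable {H : Type*} [Group H]

theorem chiIota_commute_chiPsi (h : H) : Commute (chiIota H h) (chiPsi H h) := by
  rw [← commutatorElement_eq_one_iff_commute]
  exact (QuotientGroup.eq_one_iff _).mpr (subset_normalClosure ⟨h, rfl⟩)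

theorem sup_range_chiIota_range_chiPsi : (chiIota H).range ⊔ (chiPsi H).range = ⊤ :=
  (Monoid.Coprod.range_eq _).symm.trans (QuotientGroup.range_mk' _)

noncomputable def chiEll (g : H) : chi H := (chiIota H g)⁻¹ * chiPsi H g

theorem chiEll_mem_Lsub (g : H) : chiEll g ∈ Lsub H := subset_closure ⟨g, rfl⟩

theorem chiPsi_eq_mul_chiEll (g : H) : chiPsi H g = chiIota H g * chiEll g := by
  rw [chiEll, mul_inv_cancel_left]

theorem chiEll_eq_mul_inv (g : H) : chiEll g = chiPsi H g * (chiIota H g)⁻¹ :=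
  (chiIota_commute_chiPsi g).inv_left.eq

theorem chiEll_mul (g h : H) :
    chiEll (g * h) = chiEll g * (chiIota H g * chiEll h * (chiIota H g)⁻¹) := by
  simp only [chiEll_eq_mul_inv, map_mul]
  group

theorem chiIota_mul_chiEll_mul_inv_self (g : H) :
    chiIota H g * chiEll g * (chiIota H g)⁻¹ = chiEll g := by
  calc chiIota H g * chiEll g * (chiIota H g)⁻¹ = chiPsi H g * (chiIota H g)⁻¹ := by
        rw [chiEll, mul_inv_cancel_left]
    _ = chiEll g := (chiEll_eq_mul_inv g).symm

instance Lsub_normal : (Lsub H).Normal := by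
  have hι : (chiIota H).range ≤ normalizer (Lsub H : Set (chi H)) := by
    rw [Lsub, le_normalizer_closure_iff]
    rintro _ ⟨k, rfl⟩ _ ⟨g, rfl⟩
    have : chiIota H k * chiEll g * (chiIota H k)⁻¹ = (chiEll k)⁻¹ * chiEll (k * g) := by
      rw [chiEll_mul, inv_mul_cancel_left]
    exact this ▸ mul_mem (inv_mem (chiEll_mem_Lsub k)) (chiEll_mem_Lsub (k * g))
  have hψ : (chiPsi H).range ≤ normalizer (Lsub H : Set (chi H)) := by
    rintro _ ⟨g, rfl⟩
    rw [chiPsi_eq_mul_chiEll]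
    exact mul_mem (hι ⟨g, rfl⟩) (le_normalizer (chiEll_mem_Lsub g))
  rw [← normalizer_eq_top_iff, eq_top_iff, ← sup_range_chiIota_range_chiPsi]
  exact sup_le hι hψ

noncomputable def chiFold (H : Type*) [Group H] : chi H →* H :=
  QuotientGroup.lift _ (Monoid.Coprod.lift (.id H) (.id H)) <| normalClosure_le_normal <| by
    rintro _ ⟨h, rfl⟩
    rw [SetLike.mem_coe, MonoidHom.mem_ker, map_commutatorElement,
      Monoid.Coprod.lift_apply_inl, Monoid.Coprod.lift_apply_inr]
    exact commutatorElement_self h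

theorem ker_chiFold_le_Lsub : (chiFold H).ker ≤ Lsub H := by
  have hfold : (QuotientGroup.mk' (Lsub H)).comp ((chiIota H).comp (chiFold H)) =
      QuotientGroup.mk' (Lsub H) := by
    refine QuotientGroup.monoidHom_ext _ (Monoid.Coprod.hom_ext ?_ ?_) <;> ext h
    · rfl
    · show QuotientGroup.mk' _ (chiIota H h) = QuotientGroup.mk' _ (chiPsi H h)
      simp [chiPsi_eq_mul_chiEll, chiEll_mem_Lsub]
  intro w hw
  rw [← QuotientGroup.eq_one_iff, ← QuotientGroup.mk'_apply, ← hfold, MonoidHom.comp_apply,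
    MonoidHom.comp_apply, hw, map_one, map_one]

end WeakCommutativity

section AbelianizedL

variable {H : Type*} [Group H]

abbrev chiModL' (H : Type*) [Group H] : Type _ := chi H ⧸ ⁅Lsub H, Lsub H⁆

/-- `L(H)/L(H)'`, realised as the image of `L(H)` in `χ(H)/L(H)'`. -/
noncomputable abbrev Lab (H : Type*) [Group H] : Subgroup (chiModL' H) :=
  (Lsub H).map (QuotientGroup.mk' _)

instance : (Lab H).Normal := Lsub_normal.map _ (QuotientGroup.mk'_surjective _)

instance : IsMulCommutative (Lab H) := by
  rw [← commutator_self_eq_bot_iff, ← map_commutator, ← le_bot_iff, map_le_iff_le_comap,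
    MonoidHom.comap_bot, QuotientGroup.ker_mk']

noncomputable instance : CommGroup (Lab H) :=
  { (inferInstance : Group (Lab H)) with mul_comm := mul_comm' }

noncomputable instance : MulDistribMulAction H (Lab H) :=
  MulDistribMulAction.compHom _ <|
    ConjAct.toConjAct.toMonoidHom.comp ((QuotientGroup.mk' ⁅Lsub H, Lsub H⁆).comp (chiIota H))

theorem coe_smul_Lab (h : H) (m : Lab H) :
    ((h • m : Lab H) : chiModL' H) =
      (chiIota H h : chiModL' H) * m * (chiIota H h : chiModL' H)⁻¹ :=
  ConjAct.toConjAct_smul _ _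

noncomputable def labEll (g : H) : Lab H :=
  ⟨QuotientGroup.mk (chiEll g), mem_map_of_mem _ (chiEll_mem_Lsub g)⟩

theorem isMulCocycle₁_labEll : IsMulCocycle₁ (labEll (H := H)) := by
  intro g h
  rw [mul_comm]
  ext
  simp [labEll, coe_smul_Lab, chiEll_mul]

theorem smul_labEll_self (g : H) : g • labEll g = labEll g := by
  ext
  rw [coe_smul_Lab]
  exact congrArg QuotientGroup.mk (chiIota_mul_chiEll_mul_inv_self g)

end AbelianizedL

section Semidirect

variable {H : Type*} [Group H]

open SemidirectProduct

theorem inl_ofAdd_add (x y : MonoidAlgebra ℤ H) :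
    (inl (Multiplicative.ofAdd (x + y)) : Gtilde H) =
      inl (Multiplicative.ofAdd x) * inl (Multiplicative.ofAdd y) := by
  rw [ofAdd_add, map_mul]

theorem inl_ofAdd_neg (x : MonoidAlgebra ℤ H) :
    (inl (Multiplicative.ofAdd (-x)) : Gtilde H) = (inl (Multiplicative.ofAdd x))⁻¹ := by
  rw [ofAdd_neg, map_inv]

theorem inr_mul_inl_mul_inr_inv (g : H) (x : MonoidAlgebra ℤ H) :
    (inr g : Gtilde H) * inl (Multiplicative.ofAdd x) * (inr g)⁻¹ =
      inl (Multiplicative.ofAdd (x * of ℤ H g⁻¹)) := by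
  rw [← map_inv, ← inl_aut]
  rfl

theorem inl_ofAdd_mem_Gsub {a : MonoidAlgebra ℤ H} (ha : a ∈ augIdeal H) :
    (inl (Multiplicative.ofAdd a) : Gtilde H) ∈ Gsub H :=
  subset_closure (Or.inl ⟨a, ha, rfl⟩)

theorem inl_ofAdd_mem_Nsub_iff {a : MonoidAlgebra ℤ H} :
    (inl (Multiplicative.ofAdd a) : Gtilde H) ∈ Nsub H ↔ a ∈ ideal2 H :=
  (mem_map_iff_mem inl_injective).trans Iff.rfl

theorem one_sub_of_mem_augIdeal (g : H) : 1 - of ℤ H g ∈ augIdeal H := by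
  rw [← neg_sub]
  exact neg_mem (Ideal.subset_span ⟨g, rfl⟩)

theorem inl_one_inv_mul_inr_mul_inl_one (h : H) :
    (inl (Multiplicative.ofAdd (1 : MonoidAlgebra ℤ H)))⁻¹ * inr h *
        inl (Multiplicative.ofAdd (1 : MonoidAlgebra ℤ H)) =
      (inr h : Gtilde H) * inl (Multiplicative.ofAdd (1 - of ℤ H h)) := by
  calc (inl (Multiplicative.ofAdd 1))⁻¹ * inr h * inl (Multiplicative.ofAdd 1)
      = (inr h : Gtilde H) * (inr h⁻¹ * inl (Multiplicative.ofAdd (-1)) * (inr h⁻¹)⁻¹) *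
          inl (Multiplicative.ofAdd 1) := by
        rw [inl_ofAdd_neg, map_inv]; group
    _ = inr h * inl (Multiplicative.ofAdd (1 - of ℤ H h)) := by
        rw [inr_mul_inl_mul_inr_inv, inv_inv, mul_assoc, ← inl_ofAdd_add, neg_one_mul,
          neg_add_eq_sub]

theorem commutatorElement_inr_inl (h : H) (x : MonoidAlgebra ℤ H) :
    ⁅(inr h : Gtilde H), inl (Multiplicative.ofAdd x)⁆ =
      (inl (Multiplicative.ofAdd (x * of ℤ H h⁻¹ - x)) : Gtilde H) := by
  rw [commutatorElement_def, inr_mul_inl_mul_inr_inv, sub_eq_add_neg, inl_ofAdd_add,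
    inl_ofAdd_neg]

theorem commutatorElement_inr_conj_mem_Nsub (h : H) :
    ⁅(inr h : Gtilde H), (inl (Multiplicative.ofAdd (1 : MonoidAlgebra ℤ H)))⁻¹ * inr h *
        inl (Multiplicative.ofAdd (1 : MonoidAlgebra ℤ H))⁆ ∈ Nsub H := by
  have hsq : (1 - of ℤ H h) * of ℤ H h⁻¹ - (1 - of ℤ H h) =
      of ℤ H h⁻¹ * (of ℤ H h - 1) ^ 2 := by
    simp only [sq, mul_sub, sub_mul, one_mul, mul_one, ← mul_assoc, ← map_mul, mul_inv_cancel,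
      inv_mul_cancel, map_one]
    abel
  have hcomm : ∀ a b : Gtilde H, ⁅a, a * b⁆ = a * ⁅a, b⁆ * a⁻¹ := fun a b => by
    simp only [commutatorElement_def]; group
  rw [inl_one_inv_mul_inr_mul_inl_one, hcomm, commutatorElement_inr_inl, hsq]
  refine (Nsub_normal H).conj_mem _ (inl_ofAdd_mem_Nsub_iff.mpr ?_) _
  exact Ideal.mul_mem_left _ _ (Ideal.subset_span ⟨h, 1, (mul_one _).symm⟩)

end Semidirect

section Epsilon

variable {H : Type*} [Group H]

open SemidirectProduct

noncomputable def inrG (H : Type*) [Group H] : H →* Gsub H :=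
  (inr : H →* Gtilde H).codRestrict _ (inr_mem_Gsub H)

noncomputable def inrConjG (H : Type*) [Group H] : H →* Gsub H where
  toFun h := ⟨(inl (Multiplicative.ofAdd 1))⁻¹ * inr h * inl (Multiplicative.ofAdd 1),
    conj_mem_Gsub H h⟩
  map_one' := Subtype.ext (by simp)
  map_mul' a b := Subtype.ext (by simp only [coe_mul, map_mul]; group)

noncomputable def inlG (H : Type*) [Group H] : Multiplicative (augIdeal H) →* Gsub H :=
  ((inl : _ →* Gtilde H).comp
    (AddMonoidHom.toMultiplicative (augIdeal H).toAddSubgroup.subtype)).codRestrict _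
    fun a => inl_ofAdd_mem_Gsub a.toAdd.2

noncomputable def epsilon (H : Type*) [Group H] : chi H →* Gsub H ⧸ NsubG H :=
  QuotientGroup.lift _ (Monoid.Coprod.lift ((QuotientGroup.mk' _).comp (inrG H))
      ((QuotientGroup.mk' _).comp (inrConjG H))) <| normalClosure_le_normal <| by
    rintro _ ⟨h, rfl⟩
    rw [SetLike.mem_coe, MonoidHom.mem_ker, map_commutatorElement, Monoid.Coprod.lift_apply_inl,
      Monoid.Coprod.lift_apply_inr, MonoidHom.comp_apply, MonoidHom.comp_apply,
      ← map_commutatorElement, QuotientGroup.mk'_apply, QuotientGroup.eq_one_iff]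
    exact commutatorElement_inr_conj_mem_Nsub h

theorem epsilon_chiIota (h : H) :
    epsilon H (chiIota H h) = QuotientGroup.mk ⟨inr h, inr_mem_Gsub H h⟩ := rfl

theorem epsilon_chiPsi (h : H) :
    epsilon H (chiPsi H h) = QuotientGroup.mk
      ⟨(inl (Multiplicative.ofAdd 1))⁻¹ * inr h * inl (Multiplicative.ofAdd 1),
        conj_mem_Gsub H h⟩ := rfl

theorem epsilon_chiEll (g : H) :
    epsilon H (chiEll g) =
      QuotientGroup.mk' _ (inlG H (.ofAdd ⟨1 - of ℤ H g, one_sub_of_mem_augIdeal g⟩)) := by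
  rw [chiEll, map_mul, map_inv, epsilon_chiIota, epsilon_chiPsi, ← QuotientGroup.mk_inv,
    ← QuotientGroup.mk_mul, QuotientGroup.mk'_apply]
  congr 1
  apply Subtype.ext
  simp only [coe_mul, InvMemClass.coe_inv, inl_one_inv_mul_inr_mul_inl_one, inv_mul_cancel_left]
  rfl

end Epsilon

section KernelAndImage

variable {H : Type*} [Group H]

open SemidirectProduct

/-- The sign makes `1 - g` go to the class of `ℓ(g)`, whose image under `ε` is `N(1 - g, 1)`. -/
noncomputable def augToLab (H : Type*) [Group H] : Multiplicative (augIdeal H) →* Lab H :=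
  AddMonoidHom.toMultiplicativeLeft
    ((groupRingLift fun g => -Additive.ofMul (labEll g)).comp
      (augIdeal H).toAddSubgroup.subtype)

theorem augToLab_one_sub (g : H) :
    augToLab H (.ofAdd ⟨1 - of ℤ H g, one_sub_of_mem_augIdeal g⟩) = labEll g := by
  have hone : labEll (1 : H) = 1 := map_one_of_isMulCocycle₁ isMulCocycle₁_labEll
  simp only [augToLab, AddMonoidHom.toMultiplicativeLeft_apply_apply, AddMonoidHom.comp_apply,
    toAdd_ofAdd]
  rw [show (augIdeal H).toAddSubgroup.subtype ⟨1 - of ℤ H g, one_sub_of_mem_augIdeal g⟩ =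
    1 - of ℤ H g from rfl]
  rw [map_sub, ← map_one (of ℤ H), groupRingLift_of, groupRingLift_of, hone, ofMul_one, neg_zero,
    zero_sub, neg_neg, toMul_ofMul]

theorem exists_augIdeal_of_mem_Lsub {x : chi H} (hx : x ∈ Lsub H) :
    ∃ a : Multiplicative (augIdeal H), epsilon H x = QuotientGroup.mk' (NsubG H) (inlG H a) ∧
      (x : chiModL' H) = augToLab H a := by
  let F := ((QuotientGroup.mk' (NsubG H)).comp (inlG H)).prod
    ((Lab H).subtype.comp (augToLab H))
  have hL : Lsub H ≤ F.range.comap ((epsilon H).prod (QuotientGroup.mk' ⁅Lsub H, Lsub H⁆)) := by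
    refine (closure_le _).mpr ?_
    rintro _ ⟨g, rfl⟩
    exact ⟨.ofAdd ⟨1 - of ℤ H g, one_sub_of_mem_augIdeal g⟩,
      Prod.ext (epsilon_chiEll g).symm (congrArg Subtype.val (augToLab_one_sub g))⟩
  obtain ⟨a, ha⟩ := hL hx
  exact ⟨a, (congrArg Prod.fst ha).symm, (congrArg Prod.snd ha).symm⟩

theorem commutator_Lsub_le_ker_epsilon : ⁅Lsub H, Lsub H⁆ ≤ (epsilon H).ker := by
  rw [commutator_le]
  intro x hx y hy
  obtain ⟨a, ha, -⟩ := exists_augIdeal_of_mem_Lsub hx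
  obtain ⟨b, hb, -⟩ := exists_augIdeal_of_mem_Lsub hy
  rw [MonoidHom.mem_ker, map_commutatorElement, ha, hb, ← map_commutatorElement,
    ← map_commutatorElement, commutatorElement_eq_one_iff_commute.mpr (Commute.all a b),
    map_one, map_one]

noncomputable def quotToH (H : Type*) [Group H] : Gsub H ⧸ NsubG H →* H :=
  QuotientGroup.lift _ (rightHom.comp (Gsub H).subtype) <| by
    rintro x ⟨b, -, hb⟩
    rw [MonoidHom.mem_ker, MonoidHom.comp_apply, ← hb, rightHom_inl]

theorem quotToH_comp_epsilon : (quotToH H).comp (epsilon H) = chiFold H := by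
  apply QuotientGroup.monoidHom_ext
  apply Monoid.Coprod.hom_ext <;> ext h
  · exact rightHom_inr (φ := phiAct H) h
  · show rightHom (φ := phiAct H) ((inl (Multiplicative.ofAdd (1 : MonoidAlgebra ℤ H)))⁻¹ *
        inr h * inl (Multiplicative.ofAdd (1 : MonoidAlgebra ℤ H))) = h
    simp

theorem ker_epsilon_le : (epsilon H).ker ≤ ⁅Lsub H, Lsub H⁆ := by
  intro w hw
  have hwL : w ∈ Lsub H := ker_chiFold_le_Lsub <| by
    rw [MonoidHom.mem_ker, ← quotToH_comp_epsilon, MonoidHom.comp_apply, hw, map_one]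
  obtain ⟨a, hεa, hwa⟩ := exists_augIdeal_of_mem_Lsub hwL
  rw [MonoidHom.mem_ker, hεa, QuotientGroup.mk'_apply, QuotientGroup.eq_one_iff] at hw
  have ha : a.toAdd.1 ∈ ideal2 H := inl_ofAdd_mem_Nsub_iff.mp hw
  rw [← QuotientGroup.eq_one_iff, hwa]
  simp only [augToLab, AddMonoidHom.toMultiplicativeLeft_apply_apply, AddMonoidHom.comp_apply,
    OneMemClass.coe_eq_one]
  exact congrArg Additive.toMul
    (groupRingLift_eq_zero_of_mem_ideal2 isMulCocycle₁_labEll smul_labEll_self ha)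

theorem epsilon_surjective : Function.Surjective (epsilon H) := by
  let E := ((epsilon H).range.comap (QuotientGroup.mk' (NsubG H))).map (Gsub H).subtype
  have hinl : ∀ a ∈ augIdeal H, (inl (Multiplicative.ofAdd a) : Gtilde H) ∈ E := by
    intro a ha
    suffices AddSubgroup.closure {y | ∃ h : H, y = of ℤ H h - 1} ≤
        (E.comap inl).toAddSubgroup' from this (mem_closure_of_mem_augIdeal ha)
    rw [AddSubgroup.closure_le]
    rintro _ ⟨g, rfl⟩
    refine ⟨inlG H (.ofAdd ⟨of ℤ H g - 1, Ideal.subset_span ⟨g, rfl⟩⟩), ⟨(chiEll g)⁻¹, ?_⟩, rfl⟩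
    have hneg : (Multiplicative.ofAdd
        (⟨1 - of ℤ H g, one_sub_of_mem_augIdeal g⟩ : augIdeal H))⁻¹ =
          .ofAdd ⟨of ℤ H g - 1, Ideal.subset_span ⟨g, rfl⟩⟩ := by
      rw [← ofAdd_neg]
      exact congrArg _ (Subtype.ext (neg_sub _ _))
    rw [map_inv, epsilon_chiEll, ← map_inv, ← map_inv, hneg]
  have hG : Gsub H ≤ E := by
    rw [Gsub, closure_le]
    rintro _ (⟨a, ha, rfl⟩ | ⟨h, rfl⟩)
    · exact hinl a ha
    · exact ⟨inrG H h, ⟨chiIota H h, rfl⟩, rfl⟩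
  intro y
  induction y using QuotientGroup.induction_on with
  | H x =>
    obtain ⟨x', hx', hxx'⟩ := hG x.2
    rw [← Subtype.ext hxx']
    exact hx'

end KernelAndImage

/-- The assignment h ↦ N(0,h), h^ψ ↦ N(0,h)^{(1,1)} extends to an epimorphism
ε : χ(H) → G/N whose kernel is the derived subgroup L(H)′; moreover N is
normal in G. -/
theorem stmt_6 (H : Type*) [Group H] :
    (NsubG H).Normal ∧
    ∃ ε : chi H →* ↥(Gsub H) ⧸ NsubG H,
      Function.Surjective ε ∧
      (∀ h : H, ε (chiIota H h) =
        QuotientGroup.mk ⟨SemidirectProduct.inr h, inr_mem_Gsub H h⟩) ∧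
      (∀ h : H, ε (chiPsi H h) =
        QuotientGroup.mk
          ⟨(SemidirectProduct.inl
              (Multiplicative.ofAdd (1 : MonoidAlgebra ℤ H)))⁻¹ *
            SemidirectProduct.inr h *
            SemidirectProduct.inl
              (Multiplicative.ofAdd (1 : MonoidAlgebra ℤ H)),
            conj_mem_Gsub H h⟩) ∧
      ε.ker = ⁅Lsub H, Lsub H⁆ :=
  ⟨NsubG_normal H, epsilon H, epsilon_surjective, epsilon_chiIota, epsilon_chiPsi,
    le_antisymm ker_epsilon_le commutator_Lsub_le_ker_epsilon⟩
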